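/- Vickrey's theorem (full statement): in a second-price auction with n ≥ 2 bidders, the truthful strategy profile b = v supports an equilibrium in weakly dominant strategies, and the auction is efficient (the winner has the highest valuation). -/

import Mathlib

/-!
Whatever `i` bids, the second-price auction gives `i` either nothing (payoff `0`) or the good at
the price `m := max_{j ≠ i} b_j`, which does not depend on `i`'s own bid (payoff `v_i - m`).
So no bid yields more than `max 0 (v_i - m)`, and bidding `v_i` yields exactly that, because a
truthful `i` can win only if `v_i ≥ m` and lose only if `v_i ≤ m`.
-/

open Finset

/-- The maximum bid among all `n` participants. -/
noncomputable def maxB {n : ℕ} (hn : 2 ≤ n) (b : Fin n → ℝ) : ℝ :=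
  (univ : Finset (Fin n)).sup' ⟨(⟨0, by omega⟩ : Fin n), mem_univ _⟩ b

/-- The maximum bid among participants other than `i`. -/
noncomputable def maxOthers {n : ℕ} (hn : 2 ≤ n) (b : Fin n → ℝ) (i : Fin n) : ℝ :=
  ((univ : Finset (Fin n)).erase i).sup'
    (by
      rw [← Finset.card_pos, Finset.card_erase_of_mem (mem_univ i), Finset.card_univ,
        Fintype.card_fin]
      omega) b

/-- `(x, p)` is a second-price auction outcome for bids `b`: a single winner `i`
with maximal bid gets the good (`x i = 1`) and pays the maximum of the other bids;
all other participants get nothing and pay nothing. -/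
def spa {n : ℕ} (hn : 2 ≤ n) (b x p : Fin n → ℝ) : Prop :=
  ∃ i : Fin n, b i = maxB hn b ∧ x i = 1 ∧ p i = maxOthers hn b i ∧
    ∀ j : Fin n, j ≠ i → x j = 0 ∧ p j = 0

section

variable {n : ℕ} (hn : 2 ≤ n)

lemma le_maxB (b : Fin n → ℝ) (i : Fin n) : b i ≤ maxB hn b :=
  le_sup' b (mem_univ i)

lemma le_maxOthers (b : Fin n → ℝ) {i j : Fin n} (h : j ≠ i) : b j ≤ maxOthers hn b i :=
  le_sup' b (mem_erase.2 ⟨h, mem_univ j⟩)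

lemma maxOthers_le_maxB (b : Fin n → ℝ) (i : Fin n) : maxOthers hn b i ≤ maxB hn b :=
  sup'_mono b (erase_subset i univ) _

lemma maxOthers_update (b : Fin n → ℝ) (i : Fin n) (c : ℝ) :
    maxOthers hn (Function.update b i c) i = maxOthers hn b i :=
  sup'_congr _ rfl fun _ hj ↦ Function.update_of_ne (mem_erase.1 hj).1 _ _

namespace spa

variable {hn} {b x p : Fin n → ℝ}

lemma bid_eq_maxB_of_alloc_eq_one (h : spa hn b x p) {i : Fin n} (hi : x i = 1) :
    b i = maxB hn b := by
  obtain ⟨w, hbw, -, -, hlose⟩ := h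
  by_cases hiw : i = w
  · rwa [hiw]
  · simp [(hlose i hiw).1] at hi

lemma payoff_cases (h : spa hn b x p) (i : Fin n) (val : ℝ) :
    (val * x i - p i = val - maxOthers hn b i ∧ b i = maxB hn b) ∨
      (val * x i - p i = 0 ∧ ∃ j ≠ i, b j = maxB hn b) := by
  obtain ⟨w, hbw, hxw, hpw, hlose⟩ := h
  by_cases hiw : i = w
  · subst hiw
    exact Or.inl ⟨by rw [hxw, hpw, mul_one], hbw⟩
  · obtain ⟨hxi, hpi⟩ := hlose i hiw
    exact Or.inr ⟨by rw [hxi, hpi]; ring, w, Ne.symm hiw, hbw⟩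

lemma payoff_le_max (h : spa hn b x p) (i : Fin n) (val : ℝ) :
    val * x i - p i ≤ max 0 (val - maxOthers hn b i) := by
  rcases h.payoff_cases i val with ⟨hwin, -⟩ | ⟨hlose, -⟩
  · exact hwin ▸ le_max_right _ _
  · exact hlose ▸ le_max_left _ _

lemma payoff_eq_max_of_bid_eq (h : spa hn b x p) (i : Fin n) {val : ℝ} (hbid : b i = val) :
    val * x i - p i = max 0 (val - maxOthers hn b i) := by
  rcases h.payoff_cases i val with ⟨hwin, hmax⟩ | ⟨hlose, j, hji, hmax⟩
  · have : maxOthers hn b i ≤ val := hbid ▸ hmax ▸ maxOthers_le_maxB hn b i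
    rw [hwin, max_eq_right (by linarith)]
  · have : val ≤ maxOthers hn b i :=
      calc val = b i := hbid.symm
        _ ≤ b j := hmax ▸ le_maxB hn b i
        _ ≤ maxOthers hn b i := le_maxOthers hn b hji
    rw [hlose, max_eq_left (by linarith)]

end spa

end

theorem stmt_4_general {n : ℕ} (hn : 2 ≤ n) (v : Fin n → ℝ) :
    (∀ i : Fin n, ∀ bhat : Fin n → ℝ, (∀ j, 0 ≤ bhat j) → bhat i ≠ v i →
      ∀ x1 p1 x2 p2 : Fin n → ℝ,
        spa hn (Function.update bhat i (v i)) x1 p1 → spa hn bhat x2 p2 →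
        v i * x2 i - p2 i ≤ v i * x1 i - p1 i) ∧
    (∀ x p : Fin n → ℝ, spa hn v x p → ∀ i : Fin n, x i = 1 → v i = maxB hn v) := by
  refine ⟨fun i bhat _ _ x1 p1 x2 p2 htruth hdev ↦ ?_,
    fun x p h i hi ↦ h.bid_eq_maxB_of_alloc_eq_one hi⟩
  calc v i * x2 i - p2 i ≤ max 0 (v i - maxOthers hn bhat i) := hdev.payoff_le_max i (v i)
    _ = max 0 (v i - maxOthers hn (Function.update bhat i (v i)) i) := by
      rw [maxOthers_update]
    _ = v i * x1 i - p1 i :=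
      (htruth.payoff_eq_max_of_bid_eq i (Function.update_self i (v i) bhat)).symm

/-- Vickrey's theorem — truthful bidding is weakly dominant and
the second-price auction is efficient. -/
theorem stmt_4 {n : ℕ} (hn : 2 ≤ n) (v : Fin n → ℝ) (hv : ∀ j, 0 ≤ v j) :
    (∀ i : Fin n, ∀ bhat : Fin n → ℝ, (∀ j, 0 ≤ bhat j) → bhat i ≠ v i →
      ∀ x1 p1 x2 p2 : Fin n → ℝ,
        spa hn (Function.update bhat i (v i)) x1 p1 → spa hn bhat x2 p2 →
        v i * x2 i - p2 i ≤ v i * x1 i - p1 i) ∧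
    (∀ x p : Fin n → ℝ, spa hn v x p → ∀ i : Fin n, x i = 1 → v i = maxB hn v) :=
  stmt_4_general hn v
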